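/- arXiv:0802.4260 — 2 statements merged into one kernel-verified Lean document; each statement's English description precedes it below -/
import Mathlib

section
/- The function x ↦ log(cosh x) / x² is decreasing on (0, ∞). -/
/-!
Since `d/dx (f x / x ^ 2) = (x f' x - 2 f x) / x ^ 3` and `(log ∘ cosh)' = tanh`, it suffices that
`x tanh x ≤ 2 log (cosh x)` for `x ≥ 0`. Both sides vanish at `0`, and the derivative of the difference is
`tanh x - x / cosh x ^ 2 = (sinh (2x) / 2 - x) / cosh x ^ 2 ≥ 0`.
-/

open Real Set

theorem antitoneOn_div_pow_of_mul_le {f f' : ℝ → ℝ} {n : ℕ}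
    (hf : ∀ x ∈ Ioi (0 : ℝ), HasDerivAt f (f' x) x)
    (hle : ∀ x ∈ Ioi (0 : ℝ), x * f' x ≤ n * f x) :
    AntitoneOn (fun x => f x / x ^ n) (Ioi 0) := by
  have hquot : ∀ x ∈ Ioi (0 : ℝ), HasDerivAt (fun x => f x / x ^ n)
      ((f' x * x ^ n - f x * (n * x ^ (n - 1))) / (x ^ n) ^ 2) x := fun x hx =>
    (hf x hx).div (hasDerivAt_pow n x) (pow_ne_zero n (ne_of_gt hx))
  refine antitoneOn_of_hasDerivWithinAt_nonpos (convex_Ioi 0)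
    (fun x hx => (hquot x hx).continuousAt.continuousWithinAt)
    (fun x hx => (hquot x (interior_subset hx)).hasDerivWithinAt) fun x hx => ?_
  rw [interior_Ioi] at hx
  have hx' : (0 : ℝ) < x := hx
  have hpow : x * (n * x ^ (n - 1)) = n * x ^ n := by
    cases n with
    | zero => simp
    | succ k => rw [Nat.add_sub_cancel, pow_succ]; ring
  have hnum : x * (f' x * x ^ n - f x * (n * x ^ (n - 1))) = x ^ n * (x * f' x - n * f x) := by
    linear_combination (-f x) * hpow
  have hneg : x * (f' x * x ^ n - f x * (n * x ^ (n - 1))) ≤ 0 := by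
    rw [hnum]
    exact mul_nonpos_of_nonneg_of_nonpos (by positivity) (sub_nonpos.mpr (hle x hx))
  exact div_nonpos_of_nonpos_of_nonneg (nonpos_of_mul_nonpos_right hneg hx') (sq_nonneg _)

namespace Real

theorem hasDerivAt_log_cosh (x : ℝ) : HasDerivAt (fun x => log (cosh x)) (tanh x) x := by
  rw [tanh_eq_sinh_div_cosh]
  exact (hasDerivAt_cosh x).log (cosh_pos x).ne'

theorem hasDerivAt_tanh (x : ℝ) : HasDerivAt tanh (1 / cosh x ^ 2) x := by
  have hdiv : HasDerivAt (fun x => sinh x / cosh x)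
      ((cosh x * cosh x - sinh x * sinh x) / cosh x ^ 2) x :=
    (hasDerivAt_sinh x).div (hasDerivAt_cosh x) (cosh_pos x).ne'
  rw [show tanh = fun x => sinh x / cosh x from funext tanh_eq_sinh_div_cosh]
  convert hdiv using 2
  rw [← cosh_sq_sub_sinh_sq x]
  ring

theorem mul_tanh_le_two_mul_log_cosh {x : ℝ} (hx : 0 ≤ x) : x * tanh x ≤ 2 * log (cosh x) := by
  let g : ℝ → ℝ := fun x => 2 * log (cosh x) - x * tanh x
  have hg : ∀ y, HasDerivAt g (2 * tanh y - (1 * tanh y + y * (1 / cosh y ^ 2))) y := fun y =>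
    ((hasDerivAt_log_cosh y).const_mul 2).sub ((hasDerivAt_id y).mul (hasDerivAt_tanh y))
  have hmono : MonotoneOn g (Ici 0) := by
    refine monotoneOn_of_hasDerivWithinAt_nonneg (convex_Ici 0)
      (fun y _ => (hg y).continuousAt.continuousWithinAt)
      (fun y _ => (hg y).hasDerivWithinAt) fun y hy => ?_
    rw [interior_Ici] at hy
    have hc : 0 < cosh y := cosh_pos y
    have hsinh : 2 * y ≤ 2 * sinh y * cosh y := by
      rw [← sinh_two_mul]
      exact self_le_sinh_iff.mpr (by linarith [mem_Ioi.mp hy])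
    have hderiv : 2 * tanh y - (1 * tanh y + y * (1 / cosh y ^ 2))
        = (sinh y * cosh y - y) / cosh y ^ 2 := by
      rw [tanh_eq_sinh_div_cosh]
      field_simp
      ring
    rw [hderiv]
    exact div_nonneg (by linarith) (sq_nonneg _)
  simpa [g] using hmono self_mem_Ici hx hx

end Real

theorem log_cosh_div_sq_decreasing :
    AntitoneOn (fun x : ℝ => Real.log (Real.cosh x) / x ^ 2) (Set.Ioi 0) :=
  antitoneOn_div_pow_of_mul_le (fun x _ => hasDerivAt_log_cosh x)
    fun x hx => by exact_mod_cast mul_tanh_le_two_mul_log_cosh (le_of_lt hx)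
end

section
/- For all real a and all s ≥ 1, cosh(s·a) ≤ (cosh a)^{s²}. -/
/-!
With `φ t = log (cosh (t * a))` we have `t * φ' t = (t * a) * tanh (t * a) ≤ 2 * φ t`, because
`2 * log (cosh x) - x * tanh x` vanishes at `0` and has derivative `tanh x - x / cosh x ^ 2 ≥ 0`
for `x ≥ 0`. Hence `φ t / t ^ 2` is antitone on `t > 0`, and comparing `t = 1` with `t = s` gives
`log (cosh (s * a)) ≤ s ^ 2 * log (cosh a)`.
-/

open Real Set

theorem antitoneOn_div_rpow_of_mul_deriv_le {φ φ' : ℝ → ℝ} {p : ℝ}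
    (hφ : ∀ t, 0 < t → HasDerivAt φ (φ' t) t) (hle : ∀ t, 0 < t → t * φ' t ≤ p * φ t) :
    AntitoneOn (fun t => φ t / t ^ p) (Ioi 0) := by
  have hderiv : ∀ t, 0 < t → HasDerivAt (fun t => φ t / t ^ p)
      ((φ' t * t ^ p - φ t * (p * t ^ (p - 1))) / (t ^ p) ^ 2) t := fun t ht =>
    (hφ t ht).div (hasDerivAt_rpow_const (Or.inl ht.ne')) (rpow_pos_of_pos ht p).ne'
  refine antitoneOn_of_hasDerivWithinAt_nonpos (convex_Ioi 0)
    (fun t ht => (hderiv t ht).continuousAt.continuousWithinAt)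
    (fun t ht => (hderiv t (interior_subset ht)).hasDerivWithinAt) fun t ht => ?_
  rw [interior_Ioi, mem_Ioi] at ht
  have hnum : φ' t * t ^ p - φ t * (p * t ^ (p - 1)) = t ^ (p - 1) * (t * φ' t - p * φ t) := by
    rw [rpow_sub_one ht.ne']
    field_simp
  rw [hnum]
  exact div_nonpos_of_nonpos_of_nonneg
    (mul_nonpos_of_nonneg_of_nonpos (rpow_nonneg ht.le _) (sub_nonpos.2 (hle t ht))) (sq_nonneg _)

theorem Real.hasDerivAt_tanh_s1 (x : ℝ) : HasDerivAt tanh (1 / cosh x ^ 2) x := by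
  have h := (hasDerivAt_sinh x).div (hasDerivAt_cosh x) (cosh_pos x).ne'
  rw [← sq, ← sq, cosh_sq_sub_sinh_sq] at h
  rwa [show tanh = sinh / cosh from funext tanh_eq_sinh_div_cosh]

theorem Real.hasDerivAt_log_cosh_s1 (x : ℝ) : HasDerivAt (fun x => log (cosh x)) (tanh x) x := by
  simpa only [tanh_eq_sinh_div_cosh] using (hasDerivAt_cosh x).log (cosh_pos x).ne'

theorem Real.div_cosh_sq_le_tanh {x : ℝ} (hx : 0 ≤ x) : x / cosh x ^ 2 ≤ tanh x := by
  have h := self_le_sinh_iff.2 (mul_nonneg zero_le_two hx)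
  rw [sinh_two_mul] at h
  rw [tanh_eq_sinh_div_cosh, div_le_div_iff₀ (by positivity) (cosh_pos x)]
  nlinarith [cosh_pos x]

theorem Real.mul_tanh_le_two_mul_log_cosh_of_nonneg {x : ℝ} (hx : 0 ≤ x) :
    x * tanh x ≤ 2 * log (cosh x) := by
  have hderiv : ∀ u, HasDerivAt (fun u => 2 * log (cosh u) - u * tanh u)
      (tanh u - u / cosh u ^ 2) u := fun u =>
    (((hasDerivAt_log_cosh_s1 u).const_mul 2).sub
      ((hasDerivAt_id' u).mul (hasDerivAt_tanh_s1 u))).congr_deriv (by ring)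
  have hmono : MonotoneOn (fun u => 2 * log (cosh u) - u * tanh u) (Ici 0) :=
    monotoneOn_of_hasDerivWithinAt_nonneg (convex_Ici 0)
      (fun u _ => (hderiv u).continuousAt.continuousWithinAt)
      (fun u _ => (hderiv u).hasDerivWithinAt)
      fun u hu => sub_nonneg.2 (div_cosh_sq_le_tanh (interior_subset hu))
  simpa using hmono self_mem_Ici hx hx

theorem Real.mul_tanh_le_two_mul_log_cosh_s1 (x : ℝ) : x * tanh x ≤ 2 * log (cosh x) := by
  rcases le_total 0 x with hx | hx
  · exact mul_tanh_le_two_mul_log_cosh_of_nonneg hx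
  · simpa [tanh_neg, cosh_neg] using mul_tanh_le_two_mul_log_cosh_of_nonneg (neg_nonneg.2 hx)

theorem cosh_smul_le_cosh_rpow (a s : ℝ) (hs : 1 ≤ s) :
    Real.cosh (s * a) ≤ Real.cosh a ^ (s ^ 2 : ℝ) := by
  have hanti : AntitoneOn (fun t => log (cosh (t * a)) / t ^ (2 : ℝ)) (Ioi 0) := by
    refine antitoneOn_div_rpow_of_mul_deriv_le (fun t _ =>
      (hasDerivAt_log_cosh_s1 (t * a)).comp (h₂ := fun x => log (cosh x)) t (hasDerivAt_mul_const a))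
      fun t _ => ?_
    linarith [mul_tanh_le_two_mul_log_cosh_s1 (t * a)]
  have hlog : log (cosh (s * a)) ≤ s ^ 2 * log (cosh a) := by
    have h := hanti (mem_Ioi.2 one_pos) (mem_Ioi.2 (one_pos.trans_le hs)) hs
    simp only [rpow_two] at h
    rw [one_pow, one_mul, div_one, div_le_iff₀ (by positivity)] at h
    linarith
  rw [← exp_log (cosh_pos (s * a)), rpow_def_of_pos (cosh_pos a)]
  exact exp_le_exp.2 (by linarith)
end
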